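/- arXiv:1809.00611 — 2 statements merged into one kernel-verified Lean document; each statement's English description precedes it below -/
import Mathlib

section
/- Let A : ℝ → Matrix n n ℂ be a differentiable family of Hermitian matrices. Then for every t, the function t ↦ tr(exp(A t)) is differentiable and its derivative is d/dt tr(exp(A t)) = tr(exp(A t) · A'(t)), where A'(t) is the derivative of A at t. -/
open scoped ComplexOrder

attribute [local instance] Matrix.normedAddCommGroup Matrix.normedSpace

/-- The matrix exponential of an `n × n` complex matrix. -/
noncomputable def matExp {n : ℕ} (A : Matrix (Fin n) (Fin n) ℂ) : Matrix (Fin n) (Fin n) ℂ :=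
  NormedSpace.exp A

/-- The matrix logarithm, given by the continuous functional calculus (the real
logarithm applied to the eigenvalues of a Hermitian matrix). -/
noncomputable def matLog {n : ℕ} (A : Matrix (Fin n) (Fin n) ℂ) : Matrix (Fin n) (Fin n) ℂ :=
  cfc Real.log A

/-- The von Neumann entropy `S(ρ) = −Re tr(ρ log ρ)`. -/
noncomputable def vnEntropy {n : ℕ} (ρ : Matrix (Fin n) (Fin n) ℂ) : ℝ :=
  -(Matrix.trace (ρ * matLog ρ)).re

/-- The relative entropy `S(ρ‖σ) = Re tr(ρ log ρ) − Re tr(ρ log σ)`. -/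
noncomputable def relEntropy {n : ℕ} (ρ σ : Matrix (Fin n) (Fin n) ℂ) : ℝ :=
  (Matrix.trace (ρ * matLog ρ)).re - (Matrix.trace (ρ * matLog σ)).re

/-- The partition function `Z = Re tr(exp(−βH))`. -/
noncomputable def partZ {n : ℕ} (β : ℝ) (H : Matrix (Fin n) (Fin n) ℂ) : ℝ :=
  (Matrix.trace (matExp ((-β) • H))).re

/-- The Gibbs state `ρ^β = exp(−βH)/Z`. -/
noncomputable def gibbs {n : ℕ} (β : ℝ) (H : Matrix (Fin n) (Fin n) ℂ) :
    Matrix (Fin n) (Fin n) ℂ :=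
  (partZ β H)⁻¹ • matExp ((-β) • H)

/-! Expand `exp y = ∑ yⁿ / n!` and differentiate termwise. The derivative of `y ↦ tr (y ^ (n + 1))`
in direction `h` is `∑ᵢ tr (y ^ (n - i) * h * y ^ i)`, and cyclicity of the trace makes all
`n + 1` summands equal to `tr (y ^ n * h)`. So the termwise derivatives are `tr (y ^ n * h) / n!`,
which sum to `tr (exp y * h)`, although the derivative of `exp` itself is complicated when `y`
and `h` do not commute. -/

open NormedSpace ContinuousLinearMap Metric
open scoped Nat

theorem norm_pow_mul_le {R : Type*} [SeminormedRing R] (a b : R) (n : ℕ) :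
    ‖a ^ n * b‖ ≤ ‖a‖ ^ n * ‖b‖ := by
  induction n with
  | zero => simp
  | succ n ih =>
    calc ‖a ^ (n + 1) * b‖ = ‖a * (a ^ n * b)‖ := by rw [pow_succ', mul_assoc]
      _ ≤ ‖a‖ * (‖a‖ ^ n * ‖b‖) := (norm_mul_le _ _).trans (by gcongr)
      _ = ‖a‖ ^ (n + 1) * ‖b‖ := by ring

section TraceExp

variable {𝕂 𝔸 F : Type*} [RCLike 𝕂] [NormedRing 𝔸] [NormedAlgebra 𝕂 𝔸]
  [NormedAddCommGroup F] [NormedSpace 𝕂 F] (τ : 𝔸 →L[𝕂] F)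

theorem norm_inv_factorial_smul_comp_mul_pow_le (a : 𝔸) (n : ℕ) :
    ‖(n ! : 𝕂)⁻¹ • τ.comp (mul 𝕂 𝔸 (a ^ n))‖ ≤ ‖τ‖ * (‖a‖ ^ n / n !) := by
  have hcomp : ‖τ.comp (mul 𝕂 𝔸 (a ^ n))‖ ≤ ‖τ‖ * ‖a‖ ^ n :=
    opNorm_le_bound _ (by positivity) fun b =>
      calc ‖τ (a ^ n * b)‖ ≤ ‖τ‖ * ‖a ^ n * b‖ := τ.le_opNorm _
        _ ≤ ‖τ‖ * (‖a‖ ^ n * ‖b‖) := by gcongr; exact norm_pow_mul_le a b n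
        _ = ‖τ‖ * ‖a‖ ^ n * ‖b‖ := by ring
  calc ‖(n ! : 𝕂)⁻¹ • τ.comp (mul 𝕂 𝔸 (a ^ n))‖ ≤ (n ! : ℝ)⁻¹ * (‖τ‖ * ‖a‖ ^ n) := by
        rw [norm_smul, norm_inv, RCLike.norm_natCast]
        gcongr
    _ = ‖τ‖ * (‖a‖ ^ n / n !) := by ring

theorem hasFDerivAt_trace_pow_succ (hτ : ∀ a b, τ (a * b) = τ (b * a)) (x : 𝔸) (n : ℕ) :
    HasFDerivAt (fun y => τ (y ^ (n + 1))) ((n + 1 : 𝕂) • τ.comp (mul 𝕂 𝔸 (x ^ n))) x := by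
  refine (τ.hasFDerivAt.comp x (hasFDerivAt_pow' (n + 1))).congr_fderiv ?_
  ext h
  have hcyc : ∀ i ∈ Finset.range (n + 1), τ (x ^ (n - i) * h * x ^ i) = τ (x ^ n * h) := by
    intro i hi
    rw [hτ, ← mul_assoc, ← pow_add, Nat.add_sub_cancel' (Finset.mem_range_succ_iff.mp hi)]
  simp only [comp_apply, sum_apply, smul_apply, id_apply, smul_eq_mul,
    MulOpposite.smul_eq_mul_unop, MulOpposite.unop_pow, MulOpposite.unop_op, MulOpposite.op_pow,
    Nat.pred_eq_sub_one, add_tsub_cancel_right, map_sum, mul_apply']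
  rw [Finset.sum_congr rfl hcyc, Finset.sum_const, Finset.card_range, ← Nat.cast_smul_eq_nsmul 𝕂,
    Nat.cast_succ]

variable [CompleteSpace 𝔸]

theorem hasSum_comp_exp_sub_one (x : 𝔸) :
    HasSum (fun n => ((n + 1)! : 𝕂)⁻¹ • τ (x ^ (n + 1))) (τ (exp x - 1)) := by
  simpa using (hasSum_nat_add_iff' 1).mpr ((exp_series_hasSum_exp' (𝕂 := 𝕂) x).mapL τ)

theorem hasSum_comp_mul_exp (x : 𝔸) :
    HasSum (fun n => (n ! : 𝕂)⁻¹ • τ.comp (mul 𝕂 𝔸 (x ^ n))) (τ.comp (mul 𝕂 𝔸 (exp x))) := by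
  simpa using (exp_series_hasSum_exp' (𝕂 := 𝕂) x).mapL ((compL 𝕂 𝔸 𝔸 F τ).comp (mul 𝕂 𝔸))

theorem hasFDerivAt_trace_exp [CompleteSpace F] (hτ : ∀ a b, τ (a * b) = τ (b * a)) (x : 𝔸) :
    HasFDerivAt (fun y => τ (exp y)) (τ.comp (mul 𝕂 𝔸 (exp x))) x := by
  have hterm (n : ℕ) (y : 𝔸) : HasFDerivAt (fun y => ((n + 1)! : 𝕂)⁻¹ • τ (y ^ (n + 1)))
      ((n ! : 𝕂)⁻¹ • τ.comp (mul 𝕂 𝔸 (y ^ n))) y := by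
    refine ((hasFDerivAt_trace_pow_succ τ hτ y n).const_smul _).congr_fderiv ?_
    rw [smul_smul, Nat.factorial_succ, Nat.cast_mul]
    congr 1
    field_simp
    push_cast
    ring
  have hbound (n : ℕ) (y : 𝔸) (hy : y ∈ ball x 1) :
      ‖(n ! : 𝕂)⁻¹ • τ.comp (mul 𝕂 𝔸 (y ^ n))‖ ≤ ‖τ‖ * ((‖x‖ + 1) ^ n / n !) :=
    (norm_inv_factorial_smul_comp_mul_pow_le τ y n).trans (by
      have hy_norm := (norm_lt_of_mem_ball hy).le
      gcongr)
  have hball : IsPreconnected (ball x 1) :=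
    letI := NormedSpace.restrictScalars ℝ 𝕂 𝔸
    (convex_ball x 1).isPreconnected
  have hseries := hasFDerivAt_tsum_of_isPreconnected
    ((Real.summable_pow_div_factorial (‖x‖ + 1)).mul_left ‖τ‖) isOpen_ball hball
    (fun n y _ => hterm n y) hbound (mem_ball_self one_pos)
    (hasSum_comp_exp_sub_one τ x).summable (mem_ball_self one_pos)
  rw [(hasSum_comp_mul_exp τ x).tsum_eq] at hseries
  have hsplit : (fun y => τ (exp y)) = fun y => τ 1 + ∑' n, ((n + 1)! : 𝕂)⁻¹ • τ (y ^ (n + 1)) := by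
    funext y
    rw [(hasSum_comp_exp_sub_one τ y).tsum_eq, map_sub, add_sub_cancel]
  rw [hsplit]
  exact hseries.const_add _

end TraceExp

theorem hasDerivAt_trace_matExp_general {n : ℕ}
    (A : ℝ → Matrix (Fin n) (Fin n) ℂ) (hA : Differentiable ℝ A) (t : ℝ) :
    HasDerivAt (fun s => Matrix.trace (matExp (A s)))
      (Matrix.trace (matExp (A t) * deriv A t)) t := by
  -- `exp` does not depend on the norm, so any submultiplicative one will do.
  let : NormedAddCommGroup (Matrix (Fin n) (Fin n) ℂ) := Matrix.linftyOpNormedAddCommGroup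
  let : NormedSpace ℝ (Matrix (Fin n) (Fin n) ℂ) := Matrix.linftyOpNormedSpace
  have : CompleteSpace (Matrix (Fin n) (Fin n) ℂ) := FiniteDimensional.complete ℝ _
  let : NormedRing (Matrix (Fin n) (Fin n) ℂ) := Matrix.linftyOpNormedRing
  let : NormedAlgebra ℝ (Matrix (Fin n) (Fin n) ℂ) := Matrix.linftyOpNormedAlgebra
  have hexp := hasFDerivAt_trace_exp (𝕂 := ℝ)
    (LinearMap.toContinuousLinearMap (Matrix.traceLinearMap (Fin n) ℝ ℂ))
    (fun a b => Matrix.trace_mul_comm a b) (A t)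
  exact hexp.comp_hasDerivAt t (hA t).hasDerivAt

/-- **Derivative of the trace of a matrix exponential.**
If `A : ℝ → Matrix n n ℂ` is a differentiable family of Hermitian matrices, then for
every `t` the function `t ↦ tr(exp(A t))` is differentiable with derivative
`tr(exp(A t) · A'(t))`, where `A'(t) = deriv A t`. -/
theorem hasDerivAt_trace_matExp {n : ℕ}
    (A : ℝ → Matrix (Fin n) (Fin n) ℂ) (hA : Differentiable ℝ A)
    (hherm : ∀ t, (A t).IsHermitian) (t : ℝ) :
    HasDerivAt (fun s => Matrix.trace (matExp (A s)))
      (Matrix.trace (matExp (A t) * deriv A t)) t :=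
  hasDerivAt_trace_matExp_general A hA t
end

section
/- Let β > 0, let H : ℝ → Matrix n n ℂ be a continuously differentiable family of Hermitian matrices, and let ρ : ℝ → Matrix n n ℂ be a continuous family of density matrices. For t ∈ ℝ, set Z_t = Re tr(exp(−β·H_t)), ρ^β_t = exp(−β·H_t)/Z_t, and F^β_t = −(1/β)·Real.log Z_t. Then for every τ ≥ 0, the work ΔW = ∫₀^τ Re tr(ρ_t · H'_t) dt satisfies ΔW = −(1/β)·∫₀^τ Re tr(ρ_t · (d/dt)(log ρ^β_t)) dt + (F^β_τ − F^β_0), where log ρ^β_t is given by continuous functional calculus. -/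
/-!
For Hermitian `H`, functional calculus gives `log (exp (-βH) / Z) = -βH - (log Z)·1`, so
`d/dt log ρ^β_t = -β H'_t - (log Z_t)'·1`. Pairing with a state of trace one yields
`Re tr(ρ_t · d/dt log ρ^β_t) = -β Re tr(ρ_t H'_t) - (log Z_t)'`; integrating over `[0, τ]`
and applying the fundamental theorem of calculus to `log Z_t` (smooth, as `Z_t > 0` and the
matrix exponential is analytic) gives the identity.
-/

open scoped ComplexOrder

attribute [local instance] Matrix.normedAddCommGroup Matrix.normedSpace

lemma Matrix.re_trace_mul_smul_one_add_smul {ι : Type*} [Fintype ι] [DecidableEq ι]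
    {ρ : Matrix ι ι ℂ} (hρ : ρ.trace = 1) (a b : ℝ) (M : Matrix ι ι ℂ) :
    (ρ * (a • 1 + b • M)).trace.re = a + b * (ρ * M).trace.re := by
  simp [mul_add, hρ]

section

open Matrix

variable {n : ℕ}

lemma matExp_eq_cfc_exp {A : Matrix (Fin n) (Fin n) ℂ} (hA : A.IsHermitian) :
    matExp A = cfc Real.exp A := by
  let _ : NormedRing (Matrix (Fin n) (Fin n) ℂ) := Matrix.linftyOpNormedRing
  let _ : NormedAlgebra ℝ (Matrix (Fin n) (Fin n) ℂ) := Matrix.linftyOpNormedAlgebra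
  exact (@CFC.real_exp_eq_normedSpace_exp _ _ _ _
    IsHermitian.instContinuousFunctionalCalculus A hA).symm

lemma matLog_smul_matExp {c : ℝ} (hc : 0 < c) {A : Matrix (Fin n) (Fin n) ℂ}
    (hA : A.IsHermitian) :
    matLog (c • matExp A) = Real.log c • (1 : Matrix (Fin n) (Fin n) ℂ) + A := by
  have hlog : ContinuousOn Real.log ((fun x => c * Real.exp x) '' spectrum ℝ A) :=
    Real.continuousOn_log.mono <| by
      rintro - ⟨x, -, rfl⟩
      exact Set.mem_compl_singleton_iff.mpr (by positivity)
  rw [matLog, matExp_eq_cfc_exp hA, ← cfc_const_mul c Real.exp A, ← cfc_comp' _ _ A hlog]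
  calc cfc (fun x => Real.log (c * Real.exp x)) A
      = cfc (fun x : ℝ => Real.log c + x) A :=
        cfc_congr fun x _ => by rw [Real.log_mul hc.ne' (Real.exp_pos x).ne', Real.log_exp]
    _ = Real.log c • (1 : Matrix (Fin n) (Fin n) ℂ) + A := by
        rw [cfc_const_add _ _ A, cfc_id' ℝ A, Algebra.algebraMap_eq_smul_one]

lemma trace_matExp {A : Matrix (Fin n) (Fin n) ℂ} (hA : A.IsHermitian) :
    (matExp A).trace = ∑ i, (Real.exp (hA.eigenvalues i) : ℂ) := by
  rw [matExp_eq_cfc_exp hA, hA.cfc_eq, IsHermitian.cfc, Unitary.conjStarAlgAut_apply,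
    trace_mul_cycle, Unitary.coe_star_mul_self, one_mul, trace_diagonal]
  rfl

lemma partZ_pos (hn : 0 < n) (β : ℝ) {H : Matrix (Fin n) (Fin n) ℂ} (hH : H.IsHermitian) :
    0 < partZ β H := by
  have : Nonempty (Fin n) := Fin.pos_iff_nonempty.mp hn
  rw [partZ, trace_matExp (hH.smul (IsSelfAdjoint.all (-β))), Complex.re_sum]
  exact Finset.sum_pos (fun i _ => Real.exp_pos _) Finset.univ_nonempty

lemma matLog_gibbs (hn : 0 < n) (β : ℝ) {H : Matrix (Fin n) (Fin n) ℂ} (hH : H.IsHermitian) :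
    matLog (gibbs β H) =
      (-Real.log (partZ β H)) • (1 : Matrix (Fin n) (Fin n) ℂ) + (-β) • H := by
  rw [gibbs, matLog_smul_matExp (inv_pos.mpr (partZ_pos hn β hH)) (hH.smul (IsSelfAdjoint.all _)),
    Real.log_inv]

/- The exponential series is analytic only for a submultiplicative norm, so we pass to the
ℓ∞-operator norm, which is equivalent to the entrywise sup norm in finite dimension. -/
lemma contDiff_matExp {k : WithTop ℕ∞} :
    ContDiff ℝ k (matExp : Matrix (Fin n) (Fin n) ℂ → Matrix (Fin n) (Fin n) ℂ) := by
  let _ : NormedAddCommGroup (Matrix (Fin n) (Fin n) ℂ) := Matrix.linftyOpNormedAddCommGroup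
  let _ : NormedRing (Matrix (Fin n) (Fin n) ℂ) := Matrix.linftyOpNormedRing
  let _ : NormedAlgebra ℝ (Matrix (Fin n) (Fin n) ℂ) := Matrix.linftyOpNormedAlgebra
  let toOp : (Fin n → Fin n → ℂ) ≃L[ℝ] Matrix (Fin n) (Fin n) ℂ :=
    (ofLinearEquiv ℝ).toContinuousLinearEquiv
  have hexp : ContDiff ℝ k (NormedSpace.exp : Matrix (Fin n) (Fin n) ℂ → _) :=
    contDiffOn_univ.mp <| AnalyticOnNhd.contDiffOn
      (fun M _ => NormedSpace.exp_analytic (𝕂 := ℝ) M) uniqueDiffOn_univ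
  exact (toOp.symm.contDiff.comp (hexp.comp toOp.contDiff) :)

lemma contDiff_partZ_comp {k : WithTop ℕ∞} (β : ℝ) {H : ℝ → Matrix (Fin n) (Fin n) ℂ}
    (hH : ContDiff ℝ k H) : ContDiff ℝ k (fun t => partZ β (H t)) :=
  Complex.reCLM.contDiff.comp <|
    (traceLinearMap (Fin n) ℝ ℂ).toContinuousLinearMap.contDiff.comp <|
      contDiff_matExp.comp (hH.const_smul (-β))

lemma deriv_matLog_gibbs (hn : 0 < n) (β : ℝ) {H : ℝ → Matrix (Fin n) (Fin n) ℂ}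
    (hHerm : ∀ s, (H s).IsHermitian) {t : ℝ} (hH : DifferentiableAt ℝ H t)
    (hZ : DifferentiableAt ℝ (fun s => Real.log (partZ β (H s))) t) :
    deriv (fun s => matLog (gibbs β (H s))) t =
      (-deriv (fun s => Real.log (partZ β (H s))) t) • (1 : Matrix (Fin n) (Fin n) ℂ) +
        (-β) • deriv H t := by
  simp_rw [matLog_gibbs hn β (hHerm _)]
  exact ((hZ.hasDerivAt.neg.smul_const 1).add (hH.hasDerivAt.const_smul (-β))).deriv

end

theorem work_eq_log_gibbs_derivative_integral_add_free_energy_general {n : ℕ} (hn : 0 < n)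
    (β : ℝ) (hβ : 0 < β) (H ρ : ℝ → Matrix (Fin n) (Fin n) ℂ)
    (hH : ContDiff ℝ 1 H) (hHherm : ∀ t, (H t).IsHermitian)
    (hρc : Continuous ρ)
    (hρ : ∀ t, (ρ t).PosSemidef ∧ Matrix.trace (ρ t) = 1)
    (τ : ℝ) :
    ∫ t in (0:ℝ)..τ, (Matrix.trace (ρ t * deriv H t)).re =
      -(1 / β) * (∫ t in (0:ℝ)..τ,
          (Matrix.trace (ρ t * deriv (fun s => matLog (gibbs β (H s))) t)).re)
        + ((-(1 / β) * Real.log (partZ β (H τ))) - (-(1 / β) * Real.log (partZ β (H 0)))) := by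
  have hlogZ : ContDiff ℝ 1 (fun t => Real.log (partZ β (H t))) :=
    (contDiff_partZ_comp β hH).log fun t => (partZ_pos hn β (hHherm t)).ne'
  have hintegrand : ∀ t, (ρ t * deriv (fun s => matLog (gibbs β (H s))) t).trace.re =
      -β * (ρ t * deriv H t).trace.re - deriv (fun s => Real.log (partZ β (H s))) t := by
    intro t
    rw [deriv_matLog_gibbs hn β hHherm (hH.differentiable one_ne_zero t)
      (hlogZ.differentiable one_ne_zero t), Matrix.re_trace_mul_smul_one_add_smul (hρ t).2]
    ring
  have hwork : Continuous fun t => (ρ t * deriv H t).trace.re :=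
    Complex.continuous_re.comp (hρc.matrix_mul (hH.continuous_deriv le_rfl)).matrix_trace
  have hdlogZ : Continuous (deriv fun t => Real.log (partZ β (H t))) :=
    hlogZ.continuous_deriv le_rfl
  rw [intervalIntegral.integral_congr fun t _ => hintegrand t,
    intervalIntegral.integral_sub ((hwork.intervalIntegrable 0 τ).const_mul (-β))
      (hdlogZ.intervalIntegrable 0 τ), intervalIntegral.integral_const_mul,
    intervalIntegral.integral_deriv_eq_sub (fun t _ => hlogZ.differentiable one_ne_zero t)
      (hdlogZ.intervalIntegrable 0 τ)]
  field_simp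
  ring

/-- **Work in terms of the derivative of the log-Gibbs state (Eq. (6)).**
For `β > 0`, a continuously differentiable family of Hermitian Hamiltonians `H` and a
continuous family of density matrices `ρ`, with `Z_t = Re tr(exp(−βH_t))`,
`ρ^β_t = exp(−βH_t)/Z_t` and `F^β_t = −(1/β)·log Z_t`, for every `τ ≥ 0`
`ΔW = ∫₀^τ Re tr(ρ_t H'_t) dt` equals
`−(1/β)·∫₀^τ Re tr(ρ_t · d/dt(log ρ^β_t)) dt + (F^β_τ − F^β_0)`. -/
theorem work_eq_log_gibbs_derivative_integral_add_free_energy {n : ℕ} (hn : 0 < n)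
    (β : ℝ) (hβ : 0 < β) (H ρ : ℝ → Matrix (Fin n) (Fin n) ℂ)
    (hH : ContDiff ℝ 1 H) (hHherm : ∀ t, (H t).IsHermitian)
    (hρc : Continuous ρ)
    (hρ : ∀ t, (ρ t).PosSemidef ∧ Matrix.trace (ρ t) = 1)
    (τ : ℝ) (hτ : 0 ≤ τ) :
    ∫ t in (0:ℝ)..τ, (Matrix.trace (ρ t * deriv H t)).re =
      -(1 / β) * (∫ t in (0:ℝ)..τ,
          (Matrix.trace (ρ t * deriv (fun s => matLog (gibbs β (H s))) t)).re)
        + ((-(1 / β) * Real.log (partZ β (H τ))) - (-(1 / β) * Real.log (partZ β (H 0)))) :=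
  work_eq_log_gibbs_derivative_integral_add_free_energy_general hn β hβ H ρ hH hHherm hρc hρ τ
end
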